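/- Let ℓ ∈ ℕ with ℓ ≥ 1 and define ξ : ℝ → ℝ by ξ(t) = 1/(1+t²). Then for every w ∈ ℝ the Fourier transform of ξ^ℓ is given by (F{ξ^ℓ})(w) = (1/√(2π)) · (π/2^{ℓ-1}) · e^{-|w|} · p_ℓ(|w|). -/

import Mathlib

open MeasureTheory Finset

/-- The polynomial `p_ℓ(w) = Σ_{j=0}^{ℓ-1} (1/2^j) · C(ℓ+j-1, ℓ-1) · w^{ℓ-j-1}/(ℓ-j-1)!`. -/
noncomputable def pPoly (ℓ : ℕ) (w : ℝ) : ℝ :=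
  ∑ j ∈ Finset.range ℓ,
    (1 / 2 ^ j : ℝ) * (Nat.choose (ℓ + j - 1) (ℓ - 1)) * w ^ (ℓ - j - 1) /
      (Nat.factorial (ℓ - j - 1))

/-!
Put `g(w) = e^{-|w|} p_ℓ(|w|)`. Integrating over the two half-lines, the Fourier transform of
`|x|^k e^{-|x|}` is `k! ((1 + z)^{-(k+1)} + (1 - z)^{-(k+1)})` with `z = 2πiξ`, so `𝓕 g` is a
sum of such partial fractions. With `a = (1 + z)/2` and `b = (1 - z)/2` the coefficients of
`p_ℓ` turn this sum into `(2/((1 + z)(1 - z)))^ℓ` times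
`b^ℓ Σ_{j<ℓ} C(ℓ-1+j, j) a^j + a^ℓ Σ_{j<ℓ} C(ℓ-1+j, j) b^j`, which equals `1` whenever
`a + b = 1`. Hence `𝓕 g(ξ) = 2^ℓ (1 + (2πξ)²)^{-ℓ}`, and Fourier inversion (`g` is continuous
and even) gives the transform of `(1 + t²)^{-ℓ}`.
-/

open Set Filter Topology Real Complex FourierTransform
open scoped Nat

lemma norm_ofReal_pow_mul_cexp_neg_mul (k : ℕ) (a : ℂ) {x : ℝ} (hx : 0 ≤ x) :
    ‖(x : ℂ) ^ k * cexp (-(a * x))‖ = x ^ k * rexp (-(a.re * x)) := by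
  rw [norm_mul, norm_pow, norm_exp, norm_real, Real.norm_of_nonneg hx]
  simp

lemma integrableOn_Ioi_pow_mul_cexp_neg_mul (k : ℕ) {a : ℂ} (ha : 0 < a.re) :
    IntegrableOn (fun x : ℝ => (x : ℂ) ^ k * cexp (-(a * x))) (Ioi 0) := by
  refine Integrable.mono' (integrableOn_rpow_mul_exp_neg_mul_rpow (s := k) (p := 1)
    (by linarith [k.cast_nonneg (α := ℝ)]) one_pos ha) (by fun_prop) ?_
  filter_upwards [ae_restrict_mem measurableSet_Ioi] with x (hx : 0 < x)
  rw [norm_ofReal_pow_mul_cexp_neg_mul k a hx.le, Real.rpow_natCast, Real.rpow_one, neg_mul]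

lemma tendsto_pow_mul_cexp_neg_mul_atTop (k : ℕ) {a : ℂ} (ha : 0 < a.re) :
    Tendsto (fun x : ℝ => (x : ℂ) ^ k * cexp (-(a * x))) atTop (𝓝 0) := by
  rw [tendsto_zero_iff_norm_tendsto_zero]
  refine (tendsto_rpow_mul_exp_neg_mul_atTop_nhds_zero k _ ha).congr' ?_
  filter_upwards [eventually_ge_atTop 0] with x hx
  rw [norm_ofReal_pow_mul_cexp_neg_mul k a hx, Real.rpow_natCast, neg_mul]

lemma hasDerivAt_pow_succ_mul_cexp_neg_mul (k : ℕ) (a : ℂ) (x : ℝ) :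
    HasDerivAt (fun y : ℝ => (y : ℂ) ^ (k + 1) * cexp (-(a * y)))
      ((k + 1) * ((x : ℂ) ^ k * cexp (-(a * x))) -
        a * ((x : ℂ) ^ (k + 1) * cexp (-(a * x)))) x := by
  refine ((hasDerivAt_pow (k + 1) (x : ℂ)).mul
    (((hasDerivAt_id (x : ℂ)).const_mul a).neg.cexp)).comp_ofReal.congr_deriv ?_
  simp only [Pi.neg_apply, id, Nat.cast_add, Nat.cast_one, add_tsub_cancel_right]
  ring

lemma integral_Ioi_pow_mul_cexp_neg_mul (k : ℕ) {a : ℂ} (ha : 0 < a.re) :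
    ∫ x in Ioi (0 : ℝ), (x : ℂ) ^ k * cexp (-(a * x)) = k ! / a ^ (k + 1) := by
  have ha₀ : a ≠ 0 := by rintro rfl; simp at ha
  induction k with
  | zero =>
    have h := integral_exp_mul_complex_Ioi (a := -a) (by simpa using ha) 0
    simp only [neg_mul] at h
    simp [h]
  | succ k ih =>
    have hk := integrableOn_Ioi_pow_mul_cexp_neg_mul k ha
    have hk₁ := integrableOn_Ioi_pow_mul_cexp_neg_mul (k + 1) ha
    have hparts := integral_Ioi_of_hasDerivAt_of_tendsto'
      (fun x _ => hasDerivAt_pow_succ_mul_cexp_neg_mul k a x)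
      ((hk.const_mul _).sub (hk₁.const_mul a)) (tendsto_pow_mul_cexp_neg_mul_atTop (k + 1) ha)
    rw [integral_sub (hk.const_mul _) (hk₁.const_mul a), integral_const_mul, integral_const_mul,
      ih] at hparts
    simp only [ofReal_zero, zero_pow k.succ_ne_zero, zero_mul, sub_zero] at hparts
    field_simp at hparts
    rw [eq_div_iff (pow_ne_zero _ ha₀), Nat.factorial_succ]
    push_cast
    linear_combination -hparts

section HalfLines

variable {E : Type*} [NormedAddCommGroup E] {f : ℝ → E}

lemma integrableOn_Iic_of_integrableOn_Ioi_comp_neg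
    (h : IntegrableOn (fun x => f (-x)) (Ioi 0)) : IntegrableOn f (Iic 0) := by
  rw [← (Measure.measurePreserving_neg (volume : Measure ℝ)).integrableOn_comp_preimage
    (MeasurableEquiv.neg ℝ).measurableEmbedding]
  simpa [Function.comp_def] using h.congr_set_ae Ioi_ae_eq_Ici.symm

lemma integrable_of_integrableOn_Ioi_of_integrableOn_Ioi_comp_neg (h₁ : IntegrableOn f (Ioi 0))
    (h₂ : IntegrableOn (fun x => f (-x)) (Ioi 0)) : Integrable f := by
  rw [← integrableOn_univ, ← Iic_union_Ioi (a := (0 : ℝ))]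
  exact (integrableOn_Iic_of_integrableOn_Ioi_comp_neg h₂).union h₁

lemma integral_eq_integral_Ioi_add_integral_Ioi_comp_neg [NormedSpace ℝ E]
    (h₁ : IntegrableOn f (Ioi 0)) (h₂ : IntegrableOn (fun x => f (-x)) (Ioi 0)) :
    ∫ x, f x = (∫ x in Ioi 0, f x) + ∫ x in Ioi 0, f (-x) := by
  rw [← intervalIntegral.integral_Iic_add_Ioi
      (integrableOn_Iic_of_integrableOn_Ioi_comp_neg h₂) h₁,
    add_comm, ← neg_zero, ← integral_comp_neg_Ioi, neg_zero]

end HalfLines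

lemma cexp_mul_I_smul_abs_pow_mul_exp_neg_abs (k : ℕ) (ξ : ℝ) {x : ℝ} (hx : 0 ≤ x) :
    cexp (↑(-2 * π * x * ξ) * I) • ((|x| ^ k * rexp (-|x|) : ℝ) : ℂ) =
      (x : ℂ) ^ k * cexp (-((1 + 2 * π * ξ * I) * x)) := by
  rw [abs_of_nonneg hx, smul_eq_mul]
  push_cast
  rw [mul_left_comm, ← Complex.exp_add]
  ring_nf

lemma integrable_abs_pow_mul_exp_neg_abs (k : ℕ) :
    Integrable (fun x : ℝ => ((|x| ^ k * rexp (-|x|) : ℝ) : ℂ)) := by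
  have h : IntegrableOn (fun x : ℝ => ((|x| ^ k * rexp (-|x|) : ℝ) : ℂ)) (Ioi 0) :=
    (integrableOn_Ioi_pow_mul_cexp_neg_mul k (a := 1) (by simp)).congr_fun
      (fun x hx => by
        simpa using (cexp_mul_I_smul_abs_pow_mul_exp_neg_abs k 0 (le_of_lt hx)).symm)
      measurableSet_Ioi
  exact integrable_of_integrableOn_Ioi_of_integrableOn_Ioi_comp_neg h
    (by simpa only [abs_neg] using h)

lemma fourier_abs_pow_mul_exp_neg_abs (k : ℕ) (ξ : ℝ) :
    𝓕 (fun x : ℝ => ((|x| ^ k * rexp (-|x|) : ℝ) : ℂ)) ξ =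
      k ! / (1 + 2 * π * ξ * I) ^ (k + 1) + k ! / (1 - 2 * π * ξ * I) ^ (k + 1) := by
  have hpos (x : ℝ) (hx : x ∈ Set.Ioi 0) :=
    cexp_mul_I_smul_abs_pow_mul_exp_neg_abs k ξ (le_of_lt hx)
  have hneg (x : ℝ) (hx : x ∈ Set.Ioi 0) :
      cexp (↑(-2 * π * -x * ξ) * I) • ((|-x| ^ k * rexp (-|-x|) : ℝ) : ℂ) =
        (x : ℂ) ^ k * cexp (-((1 - 2 * π * ξ * I) * x)) := by
    rw [abs_neg, show -2 * π * -x * ξ = -2 * π * x * -ξ by ring,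
      cexp_mul_I_smul_abs_pow_mul_exp_neg_abs k (-ξ) (le_of_lt hx)]
    push_cast
    ring_nf
  have hre₁ : 0 < (1 + 2 * π * ξ * I).re := by simp
  have hre₂ : 0 < (1 - 2 * π * ξ * I).re := by simp
  rw [fourier_real_eq_integral_exp_smul, integral_eq_integral_Ioi_add_integral_Ioi_comp_neg
      ((integrableOn_Ioi_pow_mul_cexp_neg_mul k hre₁).congr_fun
        (fun x hx => (hpos x hx).symm) measurableSet_Ioi)
      ((integrableOn_Ioi_pow_mul_cexp_neg_mul k hre₂).congr_fun
        (fun x hx => (hneg x hx).symm) measurableSet_Ioi),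
    setIntegral_congr_fun measurableSet_Ioi hpos, setIntegral_congr_fun measurableSet_Ioi hneg,
    integral_Ioi_pow_mul_cexp_neg_mul k hre₁, integral_Ioi_pow_mul_cexp_neg_mul k hre₂]

section NegativeBinomial

variable {R : Type*} [CommRing R]

lemma sum_range_choose_succ_add_mul_pow (m n : ℕ) (a : R) :
    ∑ j ∈ range (n + 1), ((m + 1 + j).choose j : R) * a ^ j =
      ∑ j ∈ range (n + 1), ((m + j).choose j : R) * a ^ j +
        a * ∑ j ∈ range n, ((m + 1 + j).choose j : R) * a ^ j := by
  induction n with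
  | zero => simp
  | succ n ih =>
    have hpascal : (m + 1 + (n + 1)).choose (n + 1) =
        (m + 1 + n).choose n + (m + (n + 1)).choose (n + 1) := by
      rw [show m + 1 + (n + 1) = m + 1 + n + 1 by omega, Nat.choose_succ_succ',
        show m + 1 + n = m + (n + 1) by omega]
    rw [sum_range_succ, sum_range_succ (fun j => ((m + j).choose j : R) * a ^ j) (n + 1),
      hpascal]
    push_cast
    linear_combination ih - a * sum_range_succ (fun j => ((m + 1 + j).choose j : R) * a ^ j) n

lemma mul_sum_range_choose_succ_add_mul_pow (m : ℕ) {a b : R} (hab : a + b = 1) :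
    b * ∑ j ∈ range (m + 2), ((m + 1 + j).choose j : R) * a ^ j =
      ∑ j ∈ range (m + 1), ((m + j).choose j : R) * a ^ j +
        (2 * m + 1).choose (m + 1) * a ^ (m + 1) * (b - a) := by
  have hcentral : ((2 * m + 2).choose (m + 1) : R) = 2 * (2 * m + 1).choose (m + 1) := by
    rw [Nat.choose_succ_succ', Nat.choose_symm_half]
    push_cast
    ring
  have hpascal := sum_range_choose_succ_add_mul_pow m (m + 1) a
  rw [sum_range_succ _ (m + 1), show m + 1 + (m + 1) = 2 * m + 2 by omega, hcentral,
    sum_range_succ _ (m + 1), show m + (m + 1) = 2 * m + 1 by omega] at hpascal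
  rw [eq_sub_of_add_eq' hab, sum_range_succ _ (m + 1),
    show m + 1 + (m + 1) = 2 * m + 2 by omega, hcentral]
  linear_combination hpascal

/-- For `0 ≤ a ≤ 1` the two terms are the probabilities that the player winning each game with
probability `b`, resp. `a`, is the first to win `m + 1` games. -/
theorem pow_mul_sum_range_choose_add_pow_mul_sum_range_choose (m : ℕ) {a b : R}
    (hab : a + b = 1) :
    b ^ (m + 1) * ∑ j ∈ range (m + 1), ((m + j).choose j : R) * a ^ j +
      a ^ (m + 1) * ∑ j ∈ range (m + 1), ((m + j).choose j : R) * b ^ j = 1 := by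
  induction m with
  | zero => simpa [add_comm] using hab
  | succ m ih =>
    have ha := mul_sum_range_choose_succ_add_mul_pow m hab
    have hb := mul_sum_range_choose_succ_add_mul_pow m ((add_comm b a).trans hab)
    linear_combination b ^ (m + 1) * ha + a ^ (m + 1) * hb + ih

lemma sum_range_choose_div_two_pow_mul_inv_pow_add {K : Type*} [Field K] [NeZero (2 : K)]
    (m : ℕ) {z : K} (h₁ : 1 + z ≠ 0) (h₂ : 1 - z ≠ 0) :
    ∑ j ∈ range (m + 1), ((m + j).choose j : K) / 2 ^ j *
        (1 / (1 + z) ^ (m - j + 1) + 1 / (1 - z) ^ (m - j + 1)) =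
      2 ^ (m + 1) / ((1 + z) * (1 - z)) ^ (m + 1) := by
  have hterm : ∀ j ∈ range (m + 1), ((m + j).choose j : K) / 2 ^ j *
      (1 / (1 + z) ^ (m - j + 1) + 1 / (1 - z) ^ (m - j + 1)) =
      2 ^ (m + 1) / ((1 + z) * (1 - z)) ^ (m + 1) *
        (((1 - z) / 2) ^ (m + 1) * ((m + j).choose j * ((1 + z) / 2) ^ j) +
          ((1 + z) / 2) ^ (m + 1) * ((m + j).choose j * ((1 - z) / 2) ^ j)) := by
    intro j hj
    obtain ⟨i, rfl⟩ := Nat.exists_eq_add_of_le (mem_range_succ_iff.mp hj)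
    rw [Nat.add_sub_cancel_left]
    have : (2 : K) ≠ 0 := two_ne_zero
    simp only [div_pow, mul_pow, pow_add, pow_one]
    field_simp
  rw [sum_congr rfl hterm, ← mul_sum, sum_add_distrib, ← mul_sum, ← mul_sum,
    pow_mul_sum_range_choose_add_pow_mul_sum_range_choose m (by field_simp; ring), mul_one]

end NegativeBinomial

lemma fourier_finsetSum_smul {V E ι : Type*} [NormedAddCommGroup V] [InnerProductSpace ℝ V]
    [MeasurableSpace V] [BorelSpace V] [FiniteDimensional ℝ V] [NormedAddCommGroup E]
    [NormedSpace ℂ E] (s : Finset ι) (c : ι → ℂ) (f : ι → V → E)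
    (hf : ∀ i ∈ s, Integrable (f i)) (ξ : V) :
    𝓕 (fun v => ∑ i ∈ s, c i • f i v) ξ = ∑ i ∈ s, c i • 𝓕 (f i) ξ := by
  simp_rw [fourier_eq, smul_sum, smul_comm _ (c _)]
  rw [integral_finsetSum (f := fun i v => c i • 𝐞 (-inner ℝ v ξ) • f i v) s
    fun i hi => ((fourierIntegral_convergent_iff ξ).2 (hf i hi)).smul (c i)]
  simp_rw [integral_smul]

lemma ofReal_exp_neg_mul_pPoly_succ (m : ℕ) (x : ℝ) :
    ((rexp (-x) * pPoly (m + 1) x : ℝ) : ℂ) =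
      ∑ j ∈ range (m + 1), ((m + j).choose j / (2 ^ j * (m - j)!) : ℂ) •
        ((x ^ (m - j) * rexp (-x) : ℝ) : ℂ) := by
  simp only [pPoly, add_tsub_cancel_right, ofReal_mul, ofReal_sum, mul_sum]
  refine sum_congr rfl fun j hj => ?_
  rw [show m + 1 + j - 1 = m + j by omega, show m + 1 - j - 1 = m - j by omega,
    Nat.choose_symm_add, smul_eq_mul]
  push_cast
  ring

lemma integrable_exp_neg_abs_mul_pPoly (m : ℕ) :
    Integrable (fun w : ℝ => ((rexp (-|w|) * pPoly (m + 1) |w| : ℝ) : ℂ)) := by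
  simp_rw [ofReal_exp_neg_mul_pPoly_succ, smul_eq_mul]
  exact integrable_finsetSum _ fun j _ => (integrable_abs_pow_mul_exp_neg_abs (m - j)).const_mul _

lemma fourier_exp_neg_abs_mul_pPoly (m : ℕ) (ξ : ℝ) :
    𝓕 (fun w : ℝ => ((rexp (-|w|) * pPoly (m + 1) |w| : ℝ) : ℂ)) ξ =
      2 ^ (m + 1) * ((1 / (1 + (2 * π * ξ) ^ 2) : ℝ) : ℂ) ^ (m + 1) := by
  simp_rw [ofReal_exp_neg_mul_pPoly_succ]
  rw [fourier_finsetSum_smul _ _ _ (fun j _ => integrable_abs_pow_mul_exp_neg_abs _)]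
  simp_rw [fourier_abs_pow_mul_exp_neg_abs]
  have h₁ : (1 : ℂ) + 2 * π * ξ * I ≠ 0 := fun h => by simpa using congrArg re h
  have h₂ : (1 : ℂ) - 2 * π * ξ * I ≠ 0 := fun h => by simpa using congrArg re h
  have hprod :
      (1 + 2 * π * ξ * I) * (1 - 2 * π * ξ * I) = ((1 + (2 * π * ξ) ^ 2 : ℝ) : ℂ) := by
    push_cast
    linear_combination (-(2 * π * ξ : ℂ) ^ 2) * I_sq
  rw [ofReal_div, ofReal_one, ← hprod, div_pow, one_pow, ← mul_div_assoc, mul_one,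
    ← sum_range_choose_div_two_pow_mul_inv_pow_add m h₁ h₂]
  refine sum_congr rfl fun j _ => ?_
  have : ((m - j)! : ℂ) ≠ 0 := Nat.cast_ne_zero.mpr (m - j).factorial_ne_zero
  rw [smul_eq_mul]
  field_simp

/-- Fourier inversion, rescaled from Mathlib's `e^{-2πixξ}` convention to `e^{-itw}`. -/
lemma integral_mul_cexp_neg_I_mul_eq_of_fourier_eq {f F : ℝ → ℂ} (hf : Integrable f)
    (hfc : Continuous f) (hF : Integrable F) (hfF : ∀ ξ, 𝓕 f ξ = F (2 * π * ξ)) (w : ℝ) :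
    ∫ t, F t * cexp (-(I * t * w)) = 2 * π * f (-w) := by
  have hFf : 𝓕 f = fun ξ => F (2 * π * ξ) := funext hfF
  have hinv := hf.fourierInv_fourier_eq (by rw [hFf]; exact hF.comp_mul_left' (by positivity))
    hfc.continuousAt (v := -w)
  rw [fourierInv_eq_fourier_neg, neg_neg, fourier_real_eq_integral_exp_smul, hFf] at hinv
  have hintegrand : (fun v : ℝ => cexp (↑(-2 * π * v * w) * I) • F (2 * π * v)) =
      fun v => F (2 * π * v) * cexp (-(I * ↑(2 * π * v) * w)) := by
    ext v
    rw [smul_eq_mul, mul_comm]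
    congr 2
    push_cast
    ring
  have h2π : (2 * π : ℂ) ≠ 0 := by exact_mod_cast two_pi_pos.ne'
  rw [← hinv, hintegrand, Measure.integral_comp_mul_left (fun t => F t * cexp (-(I * t * w))),
    abs_of_pos (by positivity), real_smul, ← mul_assoc]
  push_cast
  rw [mul_inv_cancel₀ h2π, one_mul]

lemma integrable_ofReal_one_div_one_add_sq_pow {n : ℕ} (hn : n ≠ 0) :
    Integrable (fun t : ℝ => ((1 / (1 + t ^ 2) : ℝ) : ℂ) ^ n) := by
  refine integrable_inv_one_add_sq.mono' (by fun_prop : Measurable _).aestronglyMeasurable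
    (ae_of_all _ fun t => ?_)
  have h₀ : 0 ≤ 1 / (1 + t ^ 2) := by positivity
  rw [norm_pow, norm_real, Real.norm_of_nonneg h₀, ← one_div]
  exact pow_le_of_le_one h₀ (div_le_one_of_le₀ (by nlinarith) (by positivity)) hn

theorem stmt_3 (ℓ : ℕ) (hℓ : 1 ≤ ℓ) (w : ℝ) :
    (1 / (Real.sqrt (2 * Real.pi) : ℂ)) *
        ∫ t : ℝ, ((1 / (1 + t ^ 2) : ℝ) : ℂ) ^ ℓ * Complex.exp (-(Complex.I * t * w)) =
      (((1 / Real.sqrt (2 * Real.pi)) * (Real.pi / 2 ^ (ℓ - 1)) *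
          Real.exp (-|w|) * pPoly ℓ |w| : ℝ) : ℂ) := by
  obtain ⟨m, rfl⟩ : ∃ m, ℓ = m + 1 := ⟨ℓ - 1, by omega⟩
  have key := integral_mul_cexp_neg_I_mul_eq_of_fourier_eq
    (F := fun t => 2 ^ (m + 1) * ((1 / (1 + t ^ 2) : ℝ) : ℂ) ^ (m + 1))
    (integrable_exp_neg_abs_mul_pPoly m) (by unfold pPoly; fun_prop)
    ((integrable_ofReal_one_div_one_add_sq_pow m.add_one_ne_zero).const_mul _)
    (fourier_exp_neg_abs_mul_pPoly m) w
  simp only [abs_neg, mul_assoc, integral_const_mul] at key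
  simp only [mul_assoc, add_tsub_cancel_right]
  rw [eq_div_of_mul_eq (pow_ne_zero _ two_ne_zero) ((mul_comm _ _).trans key)]
  push_cast
  ring
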